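/- arXiv:2305.05897 — 2 statements merged into one kernel-verified Lean document; each statement's English description precedes it below -/
import Mathlib

section
/- Let x, z : ℝ → ℝ be twice differentiable at v with G(v) = x'(v)² + z'(v)² > 0. Then the derivative of the Gauss map in the meridian direction satisfies ∂N/∂v (u,v) = ((x'(v) z''(v) − x''(v) z'(v)) / G(v)^{3/2}) · φ_v(u,v) for every u, where φ_v(u,v) = (x'(v) cos u, x'(v) sin u, z'(v)). -/
/-!
`N(·, v)` is the image, under the linear map placing the meridian plane at angle `u`, of the
unit normal `(z', -x') / √G` of the plane curve `(x', z')`. Differentiating a unit normal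
`w⊥ / |w|` leaves only its component along `w`, with coefficient `(w₁ w₂' - w₁' w₂) / |w|³`;
for `w = (x', z')` this is the stated multiple of `φ_v`.
-/

open Real

/-- The point of ℝ³ (with its standard Euclidean inner product) with coordinates `a`, `b`, `c`. -/
noncomputable def vec3 (a b c : ℝ) : EuclideanSpace ℝ (Fin 3) :=
  (WithLp.equiv 2 (Fin 3 → ℝ)).symm ![a, b, c]

lemma vec3_add (a b c a' b' c' : ℝ) :
    vec3 (a + a') (b + b') (c + c') = vec3 a b c + vec3 a' b' c' := by
  ext i
  fin_cases i <;> simp [vec3]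

lemma smul_vec3 (r a b c : ℝ) : r • vec3 a b c = vec3 (r * a) (r * b) (r * c) := by
  ext i
  fin_cases i <;> simp [vec3]

/-- The meridian half-plane `(ρ, z)` turned by the angle `u` about the `z`-axis. -/
noncomputable def meridianEmbedding (u : ℝ) : ℝ × ℝ →L[ℝ] EuclideanSpace ℝ (Fin 3) :=
  LinearMap.toContinuousLinearMap
    { toFun := fun p => vec3 (p.1 * cos u) (p.1 * sin u) p.2
      map_add' := fun p q => by simp only [Prod.fst_add, Prod.snd_add, add_mul, vec3_add]
      map_smul' := fun r p => by simp only [Prod.smul_fst, Prod.smul_snd, smul_eq_mul,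
        RingHom.id_apply, smul_vec3, mul_assoc] }

@[simp]
lemma meridianEmbedding_apply (u : ℝ) (p : ℝ × ℝ) :
    meridianEmbedding u p = vec3 (p.1 * cos u) (p.1 * sin u) p.2 :=
  rfl

lemma hasDerivAt_inv_sqrt_sq_add_sq {a b : ℝ → ℝ} {a' b' v : ℝ}
    (ha : HasDerivAt a a' v) (hb : HasDerivAt b b' v) (hG : 0 < a v ^ 2 + b v ^ 2) :
    HasDerivAt (fun t => (√(a t ^ 2 + b t ^ 2))⁻¹)
      (-(a v * a' + b v * b') / √(a v ^ 2 + b v ^ 2) ^ 3) v := by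
  have hs : 0 < √(a v ^ 2 + b v ^ 2) := sqrt_pos.mpr hG
  have hsq := (hasDerivAt_sqrt hG.ne').comp v ((ha.pow 2).add (hb.pow 2))
  refine (hsq.inv hs.ne').congr_deriv ?_
  simp only [Function.comp_apply, Pi.add_apply, Pi.pow_apply]
  field_simp
  ring

lemma hasDerivAt_unitNormal {a b : ℝ → ℝ} {a' b' v : ℝ}
    (ha : HasDerivAt a a' v) (hb : HasDerivAt b b' v) (hG : 0 < a v ^ 2 + b v ^ 2) :
    HasDerivAt (fun t => (√(a t ^ 2 + b t ^ 2))⁻¹ • (b t, -a t))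
      (((a v * b' - a' * b v) / √(a v ^ 2 + b v ^ 2) ^ 3) • (a v, b v)) v := by
  have hs : 0 < √(a v ^ 2 + b v ^ 2) := sqrt_pos.mpr hG
  have hs2 : √(a v ^ 2 + b v ^ 2) ^ 2 = a v ^ 2 + b v ^ 2 := sq_sqrt hG.le
  refine ((hasDerivAt_inv_sqrt_sq_add_sq ha hb hG).smul (hb.prodMk ha.neg)).congr_deriv ?_
  ext
  · simp only [Prod.fst_add, Prod.smul_fst, smul_eq_mul, Pi.neg_apply]
    field_simp
    linear_combination b' * hs2
  · simp only [Prod.snd_add, Prod.smul_snd, smul_eq_mul, Pi.neg_apply]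
    field_simp
    linear_combination -a' * hs2

theorem statement_3_general (x z : ℝ → ℝ) (v : ℝ)
    (hx' : DifferentiableAt ℝ (deriv x) v)
    (hz' : DifferentiableAt ℝ (deriv z) v)
    (hG : 0 < (deriv x v) ^ 2 + (deriv z v) ^ 2) :
    ∀ u : ℝ, HasDerivAt
      (fun v' => (Real.sqrt ((deriv x v') ^ 2 + (deriv z v') ^ 2))⁻¹ •
        vec3 (deriv z v' * cos u) (deriv z v' * sin u) (-(deriv x v')))
      (((deriv x v * deriv (deriv z) v - deriv (deriv x) v * deriv z v) /
          (Real.sqrt ((deriv x v) ^ 2 + (deriv z v) ^ 2)) ^ 3) •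
        vec3 (deriv x v * cos u) (deriv x v * sin u) (deriv z v)) v := by
  intro u
  have h := (meridianEmbedding u).hasFDerivAt.comp_hasDerivAt v
    (hasDerivAt_unitNormal hx'.hasDerivAt hz'.hasDerivAt hG)
  simpa only [Function.comp_def, map_smul, meridianEmbedding_apply] using h

/-- For the surface of revolution φ(u,v) = (x(v) cos u, x(v) sin u, z(v)) with Gauss map
`N(u,v) = G(v)^{−1/2}·(z'(v) cos u, z'(v) sin u, −x'(v))`, `G(v) = x'(v)² + z'(v)²`, if `x, z`
are twice differentiable at `v` and `G(v) > 0`, then for every `u`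
`∂N/∂v (u,v) = ((x'(v) z''(v) − x''(v) z'(v)) / G(v)^{3/2}) · φ_v(u,v)`, where
`φ_v(u,v) = (x'(v) cos u, x'(v) sin u, z'(v))`. -/
theorem statement_3 (x z : ℝ → ℝ) (v : ℝ)
    (hx : DifferentiableAt ℝ x v) (hx' : DifferentiableAt ℝ (deriv x) v)
    (hz : DifferentiableAt ℝ z v) (hz' : DifferentiableAt ℝ (deriv z) v)
    (hG : 0 < (deriv x v) ^ 2 + (deriv z v) ^ 2) :
    ∀ u : ℝ, HasDerivAt
      (fun v' => (Real.sqrt ((deriv x v') ^ 2 + (deriv z v') ^ 2))⁻¹ •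
        vec3 (deriv z v' * cos u) (deriv z v' * sin u) (-(deriv x v')))
      (((deriv x v * deriv (deriv z) v - deriv (deriv x) v * deriv z v) /
          (Real.sqrt ((deriv x v) ^ 2 + (deriv z v) ^ 2)) ^ 3) •
        vec3 (deriv x v * cos u) (deriv x v * sin u) (deriv z v)) v :=
  statement_3_general x z v hx' hz' hG
end

section
/- Fix real parameters 0 < α < γ and define μ, β, δ, k, x, z as in the unduloid setup. Then z is differentiable on ℝ with z'(v) = μ·(αγ + x(v)²)/(2·x(v)) for all v, and in particular z'(v) > 0 for all v (so the generating curve v ↦ (x(v), z(v)) is a graph over the z-axis direction). -/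
open Real

/-- The incomplete elliptic integral of the first kind,
`F(φ, k) = ∫₀^φ (1 − k² sin²θ)^{−1/2} dθ`. -/
noncomputable def ellipticF (k φ : ℝ) : ℝ :=
  ∫ θ in (0:ℝ)..φ, (Real.sqrt (1 - k ^ 2 * Real.sin θ ^ 2))⁻¹

/-- The incomplete elliptic integral of the second kind,
`E(φ, k) = ∫₀^φ (1 − k² sin²θ)^{1/2} dθ`. -/
noncomputable def ellipticE (k φ : ℝ) : ℝ :=
  ∫ θ in (0:ℝ)..φ, Real.sqrt (1 - k ^ 2 * Real.sin θ ^ 2)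

/-! Write `φ = μv/2 − π/4` and `Δ(φ) = √(1 − k² sin²φ)`, the common integrand of `F` and `E`.
Then `x(v) = γ Δ(φ)`, from `sin(μv) = cos 2φ = 1 − 2 sin²φ` and `k²γ² = γ² − α²`, while
`z'(v) = (μ/2) (α/Δ(φ) + γ Δ(φ))` by the fundamental theorem of calculus. So the formula for
`z'` is an identity, and it is positive because `Δ > 0` when `k² < 1`. -/

noncomputable def ellipticDelta (k φ : ℝ) : ℝ :=
  √(1 - k ^ 2 * sin φ ^ 2)

lemma one_sub_sq_mul_sin_sq_pos {k : ℝ} (hk : k ^ 2 < 1) (θ : ℝ) :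
    0 < 1 - k ^ 2 * sin θ ^ 2 := by
  nlinarith [sin_sq_le_one θ, sq_nonneg k]

lemma ellipticDelta_pos {k : ℝ} (hk : k ^ 2 < 1) (φ : ℝ) : 0 < ellipticDelta k φ :=
  sqrt_pos.mpr (one_sub_sq_mul_sin_sq_pos hk φ)

lemma continuous_ellipticDelta (k : ℝ) : Continuous (ellipticDelta k) := by
  unfold ellipticDelta
  fun_prop

lemma hasDerivAt_ellipticF {k : ℝ} (hk : k ^ 2 < 1) (φ : ℝ) :
    HasDerivAt (ellipticF k) (ellipticDelta k φ)⁻¹ φ := by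
  have hc : Continuous fun θ => (ellipticDelta k θ)⁻¹ :=
    (continuous_ellipticDelta k).inv₀ fun θ => (ellipticDelta_pos hk θ).ne'
  exact intervalIntegral.integral_hasDerivAt_right (hc.intervalIntegrable _ _)
    (hc.stronglyMeasurableAtFilter _ _) hc.continuousAt

lemma hasDerivAt_ellipticE (k φ : ℝ) : HasDerivAt (ellipticE k) (ellipticDelta k φ) φ := by
  have hc := continuous_ellipticDelta k
  exact intervalIntegral.integral_hasDerivAt_right (hc.intervalIntegrable _ _)
    (hc.stronglyMeasurableAtFilter _ _) hc.continuousAt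

lemma HasDerivAt.add_ellipticF_ellipticE {k : ℝ} (hk : k ^ 2 < 1) (α γ : ℝ) {φ : ℝ → ℝ}
    {φ' v : ℝ} (hφ : HasDerivAt φ φ' v) :
    HasDerivAt (fun v => α * ellipticF k (φ v) + γ * ellipticE k (φ v))
      (φ' * (α / ellipticDelta k (φ v) + γ * ellipticDelta k (φ v))) v := by
  have hF := ((hasDerivAt_ellipticF hk _).comp v hφ).const_mul α
  have hE := ((hasDerivAt_ellipticE k _).comp v hφ).const_mul γ
  exact (hF.add hE).congr_deriv (by ring)

lemma sqrt_unduloid_radicand {α γ k : ℝ} (hγ : 0 ≤ γ) (hk : k ^ 2 * γ ^ 2 = γ ^ 2 - α ^ 2)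
    (φ : ℝ) :
    √((γ ^ 2 - α ^ 2) / 2 * sin (2 * φ + π / 2) + (γ ^ 2 + α ^ 2) / 2) =
      γ * ellipticDelta k φ := by
  have hrad : (γ ^ 2 - α ^ 2) / 2 * sin (2 * φ + π / 2) + (γ ^ 2 + α ^ 2) / 2 =
      γ ^ 2 * (1 - k ^ 2 * sin φ ^ 2) := by
    rw [sin_add_pi_div_two, cos_two_mul_eq_one_sub]
    linear_combination sin φ ^ 2 * hk
  rw [hrad, sqrt_mul (sq_nonneg γ), sqrt_sq hγ, ellipticDelta]

/-- In the unduloid setup with parameters `0 < α < γ`, the height function `z` is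
differentiable on ℝ with `z'(v) = μ·(αγ + x(v)²)/(2·x(v))`, and in particular `z'(v) > 0`
for all `v`. -/
theorem statement_8 (α γ : ℝ) (hα : 0 < α) (hαγ : α < γ)
    (μ β δ k : ℝ) (hμ : μ = 2 / (α + γ)) (hβ : β = (γ ^ 2 - α ^ 2) / 2)
    (hδ : δ = (γ ^ 2 + α ^ 2) / 2) (hk : k = Real.sqrt (γ ^ 2 - α ^ 2) / γ)
    (x z : ℝ → ℝ)
    (hx : ∀ v, x v = Real.sqrt (β * Real.sin (μ * v) + δ))
    (hz : ∀ v, z v = α * ellipticF k (μ * v / 2 - Real.pi / 4) +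
      γ * ellipticE k (μ * v / 2 - Real.pi / 4)) :
    ∀ v : ℝ, HasDerivAt z (μ * (α * γ + (x v) ^ 2) / (2 * x v)) v ∧
      0 < μ * (α * γ + (x v) ^ 2) / (2 * x v) := by
  have hγ : 0 < γ := hα.trans hαγ
  have hk_sq : k ^ 2 * γ ^ 2 = γ ^ 2 - α ^ 2 := by
    rw [hk, div_pow, sq_sqrt (by nlinarith), div_mul_cancel₀ _ (by positivity)]
  have hk_lt : k ^ 2 < 1 := by nlinarith
  have hμ_pos : 0 < μ := by rw [hμ]; positivity
  intro v
  have hφ : HasDerivAt (fun v => μ * v / 2 - π / 4) (μ / 2) v := by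
    simpa using (((hasDerivAt_id v).const_mul μ).div_const 2).sub_const (π / 4)
  have hder := hφ.add_ellipticF_ellipticE hk_lt α γ
  rw [← funext hz] at hder
  set φ := μ * v / 2 - π / 4
  have hΔ := ellipticDelta_pos hk_lt φ
  have hxv : x v = γ * ellipticDelta k φ := by
    rw [hx, hβ, hδ, show μ * v = 2 * φ + π / 2 by ring, sqrt_unduloid_radicand hγ.le hk_sq]
  rw [hxv]
  refine ⟨hder.congr_deriv ?_, by positivity⟩
  field_simp
end
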